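/- Let V ⊆ ℂ^{n+2} be the complexification of a B-nondegenerate real subspace, α ∈ ℂ×, and L a null line such that L and ρ_V L are complementary; write p := p^V_{α,L}. Then p(0)V = p(∞)V, and for every λ ∈ ℂ ∖ {±α}, p(−λ) ∘ ρ_V ∘ p(λ)^{-1} = ρ_{V′}, where V′ := p(0)V. In particular p(−λ) ∘ ρ_V ∘ p(λ)^{-1} is independent of λ. -/

import Mathlib

noncomputable section

open Module

/-- The complexification `ℂ^{n+2}` of `ℝ^{n+1,1}`. -/
abbrev Cn (n : ℕ) := Fin (n + 2) → ℂ

/-- The complex-bilinear extension `B` of the signature `(n+1,1)` inner product on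
`ℝ^{n+1,1}`. -/
def Bf (n : ℕ) (v w : Cn n) : ℂ :=
  ∑ i : Fin (n + 2), (if (i : ℕ) < n + 1 then 1 else -1) * v i * w i

lemma Bf_add_left {n : ℕ} (v v' w : Cn n) :
    Bf n (v + v') w = Bf n v w + Bf n v' w := by
  simp only [Bf, Pi.add_apply, ← Finset.sum_add_distrib]
  exact Finset.sum_congr rfl fun i _ => by ring

lemma Bf_smul_left {n : ℕ} (c : ℂ) (v w : Cn n) :
    Bf n (c • v) w = c * Bf n v w := by
  simp only [Bf, Pi.smul_apply, smul_eq_mul, Finset.mul_sum]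
  exact Finset.sum_congr rfl fun i _ => by ring

lemma Bf_zero_left {n : ℕ} (w : Cn n) : Bf n 0 w = 0 := by
  simp [Bf]

/-- Complex conjugation on `ℂ^{n+2}`, as a `conj`-semilinear automorphism;
its fixed point set is `ℝ^{n+1,1}`. -/
def conjSL (n : ℕ) : Cn n →ₛₗ[starRingEnd ℂ] Cn n where
  toFun v := fun i => starRingEnd ℂ (v i)
  map_add' a b := by funext i; simp
  map_smul' c v := by funext i; simp

instance : RingHomSurjective (starRingEnd ℂ) :=
  ⟨fun x => ⟨starRingEnd ℂ x, by simp⟩⟩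

/-- The conjugate `Ū` of a complex subspace `U` of `ℂ^{n+2}`. -/
def conjSub {n : ℕ} (U : Submodule ℂ (Cn n)) : Submodule ℂ (Cn n) :=
  U.map (conjSL n)

/-- The real points `ℝ^{n+1,1}` inside `ℂ^{n+2}`, as a real subspace. -/
def realSub (n : ℕ) : Submodule ℝ (Cn n) where
  carrier := {v | ∀ i, starRingEnd ℂ (v i) = v i}
  add_mem' := by
    intro a b ha hb i
    simp only [Pi.add_apply, map_add, ha i, hb i]
  zero_mem' := by intro i; simp
  smul_mem' := by
    intro c v hv i
    simp only [Pi.smul_apply, Complex.real_smul, map_mul, Complex.conj_ofReal, hv i]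

/-- The real points `W ∩ ℝ^{n+1,1}` of a complex subspace `W ⊆ ℂ^{n+2}`. -/
def realPoints {n : ℕ} (W : Submodule ℂ (Cn n)) : Submodule ℝ (Cn n) :=
  (W.restrictScalars ℝ) ⊓ realSub n

/-- The Gram matrix `diag(1,1,1,-1)`. -/
def gram31 (i j : Fin 4) : ℂ :=
  if i = j then (if (i : ℕ) < 3 then 1 else -1) else 0

/-- A real subspace `P` of `ℂ^{n+2}` has signature `(3,1)` if it admits a
basis whose Gram matrix with respect to `B` is `diag(1,1,1,-1)`. -/
def hasSig31 (n : ℕ) (P : Submodule ℝ (Cn n)) : Prop :=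
  ∃ b : Fin 4 → Cn n, (∀ i, b i ∈ P) ∧
    Submodule.span ℝ (Set.range b) = P ∧
    ∀ i j, Bf n (b i) (b j) = gram31 i j

/-- The orthogonal complement of a subspace with respect to `B`. -/
def perp (n : ℕ) (V : Submodule ℂ (Cn n)) : Submodule ℂ (Cn n) where
  carrier := {v | ∀ w ∈ V, Bf n v w = 0}
  add_mem' := by
    intro a b ha hb w hw
    rw [Bf_add_left, ha w hw, hb w hw, add_zero]
  zero_mem' := by
    intro w hw
    exact Bf_zero_left w
  smul_mem' := by
    intro c v hv w hw
    rw [Bf_smul_left, hv w hw, mul_zero]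

/-- `ρ` is the reflection across `V`: the identity on `V` and minus the identity
on `V^⊥`. -/
def IsReflection (n : ℕ) (V : Submodule ℂ (Cn n)) (ρ : Cn n →ₗ[ℂ] Cn n) : Prop :=
  (∀ v ∈ V, ρ v = v) ∧ (∀ v ∈ perp n V, ρ v = -v)

/-- The automorphism `Γ^{ℓ⁺}_{ℓ⁻}(λ)`, where `ℓ⁺, ℓ⁻` are the complementary null
lines spanned by `u` and `w`: it is multiplication by `λ` on `ℓ⁺`, by `λ⁻¹` on
`ℓ⁻` and the identity on `(ℓ⁺ ⊕ ℓ⁻)^⊥`. -/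
def GammaL (n : ℕ) (u w : Cn n) (lam : ℂ) : Cn n →ₗ[ℂ] Cn n where
  toFun v := v + ((lam - 1) * (Bf n v w / Bf n u w)) • u
      + ((lam⁻¹ - 1) * (Bf n v u / Bf n u w)) • w
  map_add' a b := by
    simp only [Bf_add_left]
    module
  map_smul' c v := by
    simp only [Bf_smul_left, RingHom.id_apply]
    module

/-- `λ ↦ λ* = 1/λ̄`. -/
def cstar (z : ℂ) : ℂ := (starRingEnd ℂ z)⁻¹

/-- The linear fractional transformation appearing in the simple factor
`p^V_{α,L}`. -/
def psi (α lam : ℂ) : ℂ := (1 + α) * (lam - α) / ((1 - α) * (lam + α))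

/-- The simple factor `p^V_{α,L}(λ) = Γ^L_{ρ_V L}((1+α)(λ-α)/((1-α)(λ+α)))`,
where `ρ` is the reflection across `V` and `ℓ` spans the null line `L`. -/
def pSF (n : ℕ) (ρ : Cn n →ₗ[ℂ] Cn n) (ℓ : Cn n) (α lam : ℂ) : Cn n →ₗ[ℂ] Cn n :=
  GammaL n ℓ (ρ ℓ) (psi α lam)

/-- The value `p^V_{α,L}(∞) = Γ^L_{ρ_V L}((1+α)/(1-α))`. -/
def pSFinf (n : ℕ) (ρ : Cn n →ₗ[ℂ] Cn n) (ℓ : Cn n) (α : ℂ) : Cn n →ₗ[ℂ] Cn n :=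
  GammaL n ℓ (ρ ℓ) ((1 + α) / (1 - α))

/-!
Write `Γ(t)` for `Γ^L_{ρL}(t)` and `c = (1+α)/(1-α)`. Since `ψ(λ) = c · (λ-α)/(λ+α)` and `Γ` is
multiplicative, `p(λ) = p(∞) ∘ Γ((λ-α)/(λ+α))`; in particular `p(0) = p(∞) ∘ Γ(-1)`, and `Γ(-1)`
is an involution preserving `V`, because `ℓ + ρℓ ∈ V` and `B(v, ℓ) = B(v, ρℓ)` for `v ∈ V`.
Conjugation by `ρ` inverts `Γ(t)`, and `λ ↦ -λ` inverts `(λ-α)/(λ+α)`, so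
`p(-λ) ∘ ρ = p(∞) ∘ ρ ∘ Γ((λ-α)/(λ+α))`. Finally `p(∞)` maps `V` and `V^⊥` to mutually
orthogonal subspaces, hence intertwines `ρ_V` with `ρ_{p(∞)V}`.
-/

variable {n : ℕ}

lemma Bf_symm (v w : Cn n) : Bf n v w = Bf n w v :=
  Finset.sum_congr rfl fun _ _ => by ring

lemma Bf_add_right (v w w' : Cn n) : Bf n v (w + w') = Bf n v w + Bf n v w' := by
  rw [Bf_symm, Bf_add_left, Bf_symm w, Bf_symm w']

lemma Bf_smul_right (c : ℂ) (v w : Cn n) : Bf n v (c • w) = c * Bf n v w := by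
  rw [Bf_symm, Bf_smul_left, Bf_symm w]

def bilinB (n : ℕ) : LinearMap.BilinForm ℂ (Cn n) :=
  LinearMap.mk₂ ℂ (Bf n) Bf_add_left Bf_smul_left Bf_add_right Bf_smul_right

lemma bilinB_apply (v w : Cn n) : bilinB n v w = Bf n v w := rfl

lemma bilinB_isRefl : (bilinB n).IsRefl := fun v w h => by
  rwa [bilinB_apply, Bf_symm]

lemma Bf_sub_left (v v' w : Cn n) : Bf n (v - v') w = Bf n v w - Bf n v' w := by
  simp only [← bilinB_apply, map_sub, LinearMap.sub_apply]

lemma Bf_sub_right (v w w' : Cn n) : Bf n v (w - w') = Bf n v w - Bf n v w' := by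
  simp only [← bilinB_apply, map_sub]

lemma Bf_neg_left (v w : Cn n) : Bf n (-v) w = -Bf n v w := by
  simp only [← bilinB_apply, map_neg, LinearMap.neg_apply]

lemma perp_eq_orthogonal (V : Submodule ℂ (Cn n)) : perp n V = (bilinB n).orthogonal V := by
  ext x
  exact forall₂_congr fun y _ => by rw [bilinB_apply, Bf_symm]

lemma isCompl_perp {V : Submodule ℂ (Cn n)}
    (hVnd : ∀ v ∈ V, (∀ w ∈ V, Bf n v w = 0) → v = 0) : IsCompl V (perp n V) := by
  rw [perp_eq_orthogonal]
  refine LinearMap.BilinForm.isCompl_orthogonal_of_restrict_nondegenerate bilinB_isRefl ?_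
  refine (bilinB_isRefl.domRestrict V).nondegenerate_iff_separatingLeft.mpr fun x hx => ?_
  exact Subtype.ext (hVnd x.1 x.2 fun w hw => hx ⟨w, hw⟩)

section GammaL

variable {u w : Cn n}

lemma GammaL_apply (t : ℂ) (v : Cn n) :
    GammaL n u w t v = v + ((t - 1) * (Bf n v w / Bf n u w)) • u
      + ((t⁻¹ - 1) * (Bf n v u / Bf n u w)) • w := rfl

lemma GammaL_one : GammaL n u w 1 = LinearMap.id :=
  LinearMap.ext fun v => by simp [GammaL_apply]

lemma Bf_GammaL_apply_minus (hww : Bf n w w = 0) (hD : Bf n u w ≠ 0) (t : ℂ) (v : Cn n) :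
    Bf n (GammaL n u w t v) w = t * Bf n v w := by
  rw [GammaL_apply, Bf_add_left, Bf_add_left, Bf_smul_left, Bf_smul_left, hww]
  field_simp
  ring

lemma Bf_GammaL_apply_plus (huu : Bf n u u = 0) (hD : Bf n u w ≠ 0) (t : ℂ) (v : Cn n) :
    Bf n (GammaL n u w t v) u = t⁻¹ * Bf n v u := by
  rw [GammaL_apply, Bf_add_left, Bf_add_left, Bf_smul_left, Bf_smul_left, huu, Bf_symm w]
  field_simp
  ring

lemma GammaL_mul (huu : Bf n u u = 0) (hww : Bf n w w = 0) (hD : Bf n u w ≠ 0) (s t : ℂ) :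
    GammaL n u w (s * t) = (GammaL n u w s).comp (GammaL n u w t) := by
  refine LinearMap.ext fun v => ?_
  rw [LinearMap.comp_apply, GammaL_apply s, Bf_GammaL_apply_minus hww hD,
    Bf_GammaL_apply_plus huu hD, GammaL_apply t, GammaL_apply (s * t), mul_inv]
  match_scalars <;> ring

/- `Γ(t)` is an isometry for `t ≠ 0`; the correction term also covers the junk value `Γ(0)`,
which is `p(∞)` when `α = ±1`. -/
lemma Bf_GammaL_GammaL (huu : Bf n u u = 0) (hww : Bf n w w = 0) (hD : Bf n u w ≠ 0)
    (t : ℂ) (x y : Cn n) :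
    Bf n (GammaL n u w t x) (GammaL n u w t y) = Bf n x y
      + (t * t⁻¹ - 1) * ((Bf n x w * Bf n y u + Bf n x u * Bf n y w) / Bf n u w) := by
  rw [GammaL_apply t x, Bf_add_left, Bf_add_left, Bf_smul_left, Bf_smul_left,
    Bf_symm u (GammaL n u w t y), Bf_symm w (GammaL n u w t y), Bf_GammaL_apply_minus hww hD,
    Bf_GammaL_apply_plus huu hD, Bf_symm x, GammaL_apply t y, Bf_add_left, Bf_add_left,
    Bf_smul_left, Bf_smul_left, Bf_symm u x, Bf_symm w x, Bf_symm y x]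
  field_simp
  ring

end GammaL

section Reflection

variable {V : Submodule ℂ (Cn n)} {ρ : Cn n →ₗ[ℂ] Cn n}

lemma IsReflection.exists_decomp
    (hVnd : ∀ v ∈ V, (∀ w ∈ V, Bf n v w = 0) → v = 0) (hρ : IsReflection n V ρ) (x : Cn n) :
    ∃ v ∈ V, ∃ v' ∈ perp n V, x = v + v' ∧ ρ x = v - v' := by
  have hx : x ∈ V ⊔ perp n V := (isCompl_perp hVnd).sup_eq_top ▸ Submodule.mem_top
  obtain ⟨v, hv, v', hv', rfl⟩ := Submodule.mem_sup.mp hx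
  refine ⟨v, hv, v', hv', rfl, ?_⟩
  rw [map_add, hρ.1 v hv, hρ.2 v' hv', sub_eq_add_neg]


lemma IsReflection.apply_apply (hVnd : ∀ v ∈ V, (∀ w ∈ V, Bf n v w = 0) → v = 0)
    (hρ : IsReflection n V ρ) (x : Cn n) : ρ (ρ x) = x := by
  obtain ⟨v, hv, v', hv', rfl, hρx⟩ := hρ.exists_decomp hVnd x
  rw [hρx, map_sub, hρ.1 v hv, hρ.2 v' hv', sub_neg_eq_add]

lemma IsReflection.Bf_apply_apply (hVnd : ∀ v ∈ V, (∀ w ∈ V, Bf n v w = 0) → v = 0)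
    (hρ : IsReflection n V ρ) (x y : Cn n) : Bf n (ρ x) (ρ y) = Bf n x y := by
  obtain ⟨v, hv, v', hv', rfl, hρx⟩ := hρ.exists_decomp hVnd x
  obtain ⟨z, hz, z', hz', rfl, hρy⟩ := hρ.exists_decomp hVnd y
  have h1 : Bf n v' z = 0 := hv' z hz
  have h2 : Bf n v z' = 0 := (Bf_symm v z').trans (hz' v hv)
  rw [hρx, hρy]
  simp only [Bf_add_left, Bf_sub_left, Bf_add_right, Bf_sub_right, h1, h2]
  ring

lemma IsReflection.add_apply_mem (hVnd : ∀ v ∈ V, (∀ w ∈ V, Bf n v w = 0) → v = 0)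
    (hρ : IsReflection n V ρ) (x : Cn n) : x + ρ x ∈ V := by
  obtain ⟨v, hv, v', -, rfl, hρx⟩ := hρ.exists_decomp hVnd x
  rw [hρx, show v + v' + (v - v') = (2 : ℂ) • v by module]
  exact V.smul_mem 2 hv

lemma IsReflection.Bf_apply_right_of_mem (hVnd : ∀ v ∈ V, (∀ w ∈ V, Bf n v w = 0) → v = 0)
    (hρ : IsReflection n V ρ) {v : Cn n} (hv : v ∈ V) (x : Cn n) :
    Bf n v (ρ x) = Bf n v x := by
  rw [← hρ.Bf_apply_apply hVnd v x, hρ.1 v hv]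

lemma IsReflection.Bf_apply_right_of_mem_perp
    (hVnd : ∀ v ∈ V, (∀ w ∈ V, Bf n v w = 0) → v = 0)
    (hρ : IsReflection n V ρ) {v : Cn n} (hv : v ∈ perp n V) (x : Cn n) :
    Bf n v (ρ x) = -Bf n v x := by
  rw [← hρ.Bf_apply_apply hVnd v x, hρ.2 v hv, Bf_neg_left, neg_neg]

variable {u : Cn n}

lemma IsReflection.apply_GammaL (hVnd : ∀ v ∈ V, (∀ w ∈ V, Bf n v w = 0) → v = 0)
    (hρ : IsReflection n V ρ) (t : ℂ) (x : Cn n) :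
    ρ (GammaL n u (ρ u) t x) = GammaL n u (ρ u) t⁻¹ (ρ x) := by
  have e1 : Bf n (ρ x) (ρ u) = Bf n x u := hρ.Bf_apply_apply hVnd x u
  have e2 : Bf n (ρ x) u = Bf n x (ρ u) := by
    conv_lhs => rw [← hρ.apply_apply hVnd u]
    exact hρ.Bf_apply_apply hVnd x (ρ u)
  rw [GammaL_apply, map_add, map_add, map_smul, map_smul, hρ.apply_apply hVnd,
    GammaL_apply, e1, e2, inv_inv]
  module

lemma IsReflection.GammaL_neg_one_mem (hVnd : ∀ v ∈ V, (∀ w ∈ V, Bf n v w = 0) → v = 0)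
    (hρ : IsReflection n V ρ) {v : Cn n} (hv : v ∈ V) : GammaL n u (ρ u) (-1) v ∈ V := by
  have key : GammaL n u (ρ u) (-1) v = v + (-2 * (Bf n v u / Bf n u (ρ u))) • (u + ρ u) := by
    rw [GammaL_apply, hρ.Bf_apply_right_of_mem hVnd hv, inv_neg, inv_one]
    module
  rw [key]
  exact V.add_mem hv (V.smul_mem _ (hρ.add_apply_mem hVnd u))

lemma IsReflection.map_GammaL_neg_one (hVnd : ∀ v ∈ V, (∀ w ∈ V, Bf n v w = 0) → v = 0)
    (hρ : IsReflection n V ρ) (huu : Bf n u u = 0) (hD : Bf n u (ρ u) ≠ 0) :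
    V.map (GammaL n u (ρ u) (-1)) = V := by
  have hww : Bf n (ρ u) (ρ u) = 0 := (hρ.Bf_apply_apply hVnd u u).trans huu
  have hinv (v : Cn n) : GammaL n u (ρ u) (-1) (GammaL n u (ρ u) (-1) v) = v := by
    rw [← LinearMap.comp_apply, ← GammaL_mul huu hww hD, neg_one_mul, neg_neg, GammaL_one,
      LinearMap.id_apply]
  refine le_antisymm (Submodule.map_le_iff_le_comap.mpr fun v hv => ?_) fun v hv => ?_
  · exact hρ.GammaL_neg_one_mem hVnd hv
  · exact ⟨_, hρ.GammaL_neg_one_mem hVnd hv, hinv v⟩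

lemma IsReflection.Bf_GammaL_GammaL_eq_zero
    (hVnd : ∀ v ∈ V, (∀ w ∈ V, Bf n v w = 0) → v = 0) (hρ : IsReflection n V ρ)
    (huu : Bf n u u = 0) (hD : Bf n u (ρ u) ≠ 0) (t : ℂ) {v' z : Cn n}
    (hv' : v' ∈ perp n V) (hz : z ∈ V) :
    Bf n (GammaL n u (ρ u) t v') (GammaL n u (ρ u) t z) = 0 := by
  have hww : Bf n (ρ u) (ρ u) = 0 := (hρ.Bf_apply_apply hVnd u u).trans huu
  rw [Bf_GammaL_GammaL huu hww hD, hv' z hz, hρ.Bf_apply_right_of_mem_perp hVnd hv',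
    hρ.Bf_apply_right_of_mem hVnd hz]
  ring

lemma IsReflection.apply_map_GammaL (hVnd : ∀ v ∈ V, (∀ w ∈ V, Bf n v w = 0) → v = 0)
    (hρ : IsReflection n V ρ) (huu : Bf n u u = 0) (hD : Bf n u (ρ u) ≠ 0) {t : ℂ}
    {ρ' : Cn n →ₗ[ℂ] Cn n} (hρ' : IsReflection n (V.map (GammaL n u (ρ u) t)) ρ')
    (x : Cn n) : ρ' (GammaL n u (ρ u) t x) = GammaL n u (ρ u) t (ρ x) := by
  obtain ⟨v, hv, v', hv', rfl, hρx⟩ := hρ.exists_decomp hVnd x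
  have h1 : GammaL n u (ρ u) t v ∈ V.map (GammaL n u (ρ u) t) := Submodule.mem_map_of_mem hv
  have h2 : GammaL n u (ρ u) t v' ∈ perp n (V.map (GammaL n u (ρ u) t)) := by
    rintro _ ⟨z, hz, rfl⟩
    exact hρ.Bf_GammaL_GammaL_eq_zero hVnd huu hD t hv' hz
  rw [hρx, map_add, map_add, hρ'.1 _ h1, hρ'.2 _ h2, map_sub, sub_eq_add_neg]

end Reflection

lemma pSF_eq_comp {ρ : Cn n →ₗ[ℂ] Cn n} {ℓ : Cn n} (hℓℓ : Bf n ℓ ℓ = 0)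
    (hρℓ : Bf n (ρ ℓ) (ρ ℓ) = 0) (hD : Bf n ℓ (ρ ℓ) ≠ 0) (α lam : ℂ) :
    pSF n ρ ℓ α lam = (pSFinf n ρ ℓ α).comp (GammaL n ℓ (ρ ℓ) ((lam - α) / (lam + α))) := by
  rw [pSF, pSFinf, ← GammaL_mul hℓℓ hρℓ hD, psi, mul_div_mul_comm]

theorem statement4_general (n : ℕ) (V : Submodule ℂ (Cn n))
    (hVnd : ∀ v ∈ V, (∀ w ∈ V, Bf n v w = 0) → v = 0)
    (ρ : Cn n →ₗ[ℂ] Cn n) (hρ : IsReflection n V ρ)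
    (α : ℂ) (hα : α ≠ 0)
    (ℓ : Cn n) (hℓnull : Bf n ℓ ℓ = 0)
    (hℓcompl : Bf n ℓ (ρ ℓ) ≠ 0) :
    Submodule.map (pSF n ρ ℓ α 0) V = Submodule.map (pSFinf n ρ ℓ α) V ∧
      ∀ lam : ℂ, lam ≠ α → lam ≠ -α →
        ∀ ρ' : Cn n →ₗ[ℂ] Cn n,
          IsReflection n (Submodule.map (pSF n ρ ℓ α 0) V) ρ' →
          (pSF n ρ ℓ α (-lam)).comp ρ = ρ'.comp (pSF n ρ ℓ α lam) := by
  have hp := pSF_eq_comp hℓnull ((hρ.Bf_apply_apply hVnd ℓ ℓ).trans hℓnull) hℓcompl α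
  have hmap : V.map (pSF n ρ ℓ α 0) = V.map (pSFinf n ρ ℓ α) := by
    rw [hp, Submodule.map_comp, zero_sub, zero_add, neg_div_self hα,
      hρ.map_GammaL_neg_one hVnd hℓnull hℓcompl]
  refine ⟨hmap, fun lam _ _ ρ' hρ' => LinearMap.ext fun x => ?_⟩
  rw [hmap] at hρ'
  have hinv : (-lam - α) / (-lam + α) = ((lam - α) / (lam + α))⁻¹ := by
    rw [inv_div, ← neg_div_neg_eq]
    congr 1 <;> ring
  simp only [LinearMap.comp_apply, hp, hinv, ← hρ.apply_GammaL hVnd]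
  exact (hρ.apply_map_GammaL hVnd hℓnull hℓcompl hρ' _).symm

/-- Let `V` be the complexification of a `B`-nondegenerate real
subspace (with reflection `ρ = ρ_V`), `α ∈ ℂ^×` and `L = ⟨ℓ⟩` a null line with `L` and
`ρ_V L` complementary; write `p = p^V_{α,L}`.  Then `p(0)V = p(∞)V`, and for every
`λ ∈ ℂ ∖ {±α}`, `p(-λ) ∘ ρ_V ∘ p(λ)⁻¹ = ρ_{V'}` where `V' := p(0)V`; in particular it
is independent of `λ`. -/
theorem statement4 (n : ℕ) (V : Submodule ℂ (Cn n))
    (hVconj : conjSub V = V)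
    (hVnd : ∀ v ∈ V, (∀ w ∈ V, Bf n v w = 0) → v = 0)
    (ρ : Cn n →ₗ[ℂ] Cn n) (hρ : IsReflection n V ρ)
    (α : ℂ) (hα : α ≠ 0)
    (ℓ : Cn n) (hℓ : ℓ ≠ 0) (hℓnull : Bf n ℓ ℓ = 0)
    (hℓcompl : Bf n ℓ (ρ ℓ) ≠ 0) :
    Submodule.map (pSF n ρ ℓ α 0) V = Submodule.map (pSFinf n ρ ℓ α) V ∧
      ∀ lam : ℂ, lam ≠ α → lam ≠ -α →
        ∀ ρ' : Cn n →ₗ[ℂ] Cn n,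
          IsReflection n (Submodule.map (pSF n ρ ℓ α 0) V) ρ' →
          (pSF n ρ ℓ α (-lam)).comp ρ = ρ'.comp (pSF n ρ ℓ α lam) :=
  statement4_general n V hVnd ρ hρ α hα ℓ hℓnull hℓcompl

end
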